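/- μ-normality implies μ-block normality: if X ∈ A^ω is μ-normal, then for every nonempty word w ∈ A^k, lim_{m→∞} (1/m)·#{0 ≤ i < m : X(ki)⋯X(ki+k−1) = w} = μ(w). -/

import Mathlib

/-!
Group the aligned blocks of length `k = |w|` into superblocks of `t` consecutive blocks. Under the
Bernoulli measure, the number of copies of `w` among the `t` blocks of a superblock is a sum of `t`
independent indicators of mean `μ(w)`, and the fourth-moment bound `E S⁴ ≤ 3t²` for the centred sum
shows that the atypical superblocks, where this number is off from `t μ(w)` by more than `δt`, have
total mass at most `3/(δ⁴t²)`. By normality, the aligned occurrences of atypical superblocks among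
the first `m` blocks are at most their sliding occurrences, about `3km/(δ⁴t²)` of them; each costs
at most `t`, a typical superblock costs at most `δt`. So the block frequency of `w` is eventually
within `δ + 3k/(δ⁴t) + o(1)` of `μ(w)`; let `t → ∞`, then `δ → 0`. A second-moment bound would only
give an error `k/δ²`, which does not shrink as `t` grows.
-/

open Filter Topology

/-- The prefix `X(0) X(1) ⋯ X(n-1)` of an infinite sequence, as a list. -/
def pref {A : Type*} (X : ℕ → A) (n : ℕ) : List A := (List.range n).map X

/-- Number of occurrences of the word `w` in the prefix `X[0..n]`
(indices `i` with `0 ≤ i ≤ n - |w| + 1`). -/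
def nbocc {A : Type*} [DecidableEq A] (w : List A) (X : ℕ → A) (n : ℕ) : ℕ :=
  ((Finset.range (n + 2 - w.length)).filter
    (fun i => (List.range w.length).map (fun j => X (i + j)) = w)).card

/-- Frequency of occurrences of `w` in `X[0..n]`. -/
noncomputable def freq {A : Type*} [DecidableEq A] (w : List A) (X : ℕ → A) (n : ℕ) : ℝ :=
  (nbocc w X n : ℝ) / ((n + 2 - w.length : ℕ) : ℝ)

/-- The Bernoulli measure of a word: product of the measures of its letters. -/
def wmeas {A : Type*} (μ : A → ℝ) (w : List A) : ℝ := (w.map μ).prod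

/-- `X` is `μ`-normal: every nonempty word occurs with asymptotic frequency `μ(w)`. -/
def BNormal {A : Type*} [DecidableEq A] (μ : A → ℝ) (X : ℕ → A) : Prop :=
  ∀ w : List A, w ≠ [] → Tendsto (fun n => freq w X n) atTop (𝓝 (wmeas μ w))

/-- Iterated transition function of a deterministic automaton. -/
def dstar {Q A : Type*} (δ : Q → A → Q) (q : Q) (w : List A) : Q := w.foldl δ q

/-- Capital of an automatic gambler started in state `q` after reading `w`. -/
def capital {Q A : Type*} (δ : Q → A → Q) (γ : Q → A → ℝ) : Q → List A → ℝ
  | _, [] => 1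
  | q, a :: w => γ q a * capital δ γ (δ q a) w

/-- Number of aligned (block) occurrences of `w` at positions `k·i`, `i < m`,
where `k = |w|`. -/
def nboccBlock {A : Type*} [DecidableEq A] (w : List A) (X : ℕ → A) (m : ℕ) : ℕ :=
  ((Finset.range m).filter
    (fun i => (List.range w.length).map (fun j => X (w.length * i + j)) = w)).card

open Finset

section Words

variable {A : Type*}

def window (X : ℕ → A) (q n : ℕ) : Fin n → A := fun r => X (q + r)

def superblock (X : ℕ → A) (k t j : ℕ) : Fin t → Fin k → A :=
  fun s => window X (k * (t * j + s)) k

-- Letter `r` of block `j` sits at position `k * j + r`.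
def flattenBlocks {t k : ℕ} (y : Fin t → Fin k → A) : Fin (t * k) → A :=
  fun i => Function.uncurry y (finProdFinEquiv.symm i)

theorem List.map_range_eq_ofFn (g : ℕ → A) (n : ℕ) :
    (List.range n).map g = List.ofFn (fun i : Fin n => g i) :=
  List.ext_getElem (by simp) fun _ _ _ => by simp

theorem map_range_eq_ofFn_iff (X : ℕ → A) (q : ℕ) {n : ℕ} (f : Fin n → A) :
    (List.range n).map (fun i => X (q + i)) = List.ofFn f ↔ window X q n = f := by
  rw [List.map_range_eq_ofFn, List.ofFn_inj]
  rfl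

theorem nbocc_ofFn [DecidableEq A] (X : ℕ → A) {k : ℕ} (f : Fin k → A) (n : ℕ) :
    nbocc (List.ofFn f) X n = #{i ∈ range (n + 2 - k) | window X i k = f} := by
  simp only [nbocc, List.length_ofFn, map_range_eq_ofFn_iff]

theorem nboccBlock_ofFn [DecidableEq A] (X : ℕ → A) {k : ℕ} (b : Fin k → A) (m : ℕ) :
    nboccBlock (List.ofFn b) X m = #{i ∈ range m | window X (k * i) k = b} := by
  simp only [nboccBlock, List.length_ofFn, map_range_eq_ofFn_iff]

theorem wmeas_ofFn (μ : A → ℝ) {n : ℕ} (f : Fin n → A) :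
    wmeas μ (List.ofFn f) = ∏ i, μ (f i) := by
  rw [wmeas, List.map_ofFn, List.prod_ofFn]
  rfl

theorem wmeas_ofFn_nonneg {μ : A → ℝ} (hμ0 : ∀ a, 0 ≤ μ a) {k : ℕ} (b : Fin k → A) :
    0 ≤ wmeas μ (List.ofFn b) :=
  wmeas_ofFn μ b ▸ prod_nonneg fun _ _ => hμ0 _

theorem prod_flattenBlocks {M : Type*} [CommMonoid M] (g : A → M) {t k : ℕ}
    (y : Fin t → Fin k → A) : ∏ i, g (flattenBlocks y i) = ∏ j, ∏ r, g (y j r) := by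
  rw [← finProdFinEquiv.prod_comp, Fintype.prod_prod_type]
  simp [flattenBlocks]

theorem flattenBlocks_superblock (X : ℕ → A) (k t j : ℕ) :
    flattenBlocks (superblock X k t j) = window X (t * k * j) (t * k) := by
  funext i
  simp only [flattenBlocks, finProdFinEquiv_symm_apply, Function.uncurry_apply_pair, superblock,
    window, Fin.coe_divNat, Fin.coe_modNat]
  congr 1
  have := Nat.div_add_mod (i : ℕ) k
  nlinarith

end Words

section ProdExpect

variable {B : Type*} [Fintype B] (ν : B → ℝ)

def prodExpect (t : ℕ) (g : (Fin t → B) → ℝ) : ℝ := ∑ y, (∏ j, ν (y j)) * g y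

theorem sum_prod_eq_one (hν : ∑ c, ν c = 1) (t : ℕ) : ∑ y : Fin t → B, ∏ j, ν (y j) = 1 := by
  rw [← Fintype.prod_sum (fun _ : Fin t => ν), hν, Finset.prod_const_one]

theorem prodExpect_succ (t : ℕ) (g : (Fin (t + 1) → B) → ℝ) :
    prodExpect ν (t + 1) g = ∑ c, ν c * prodExpect ν t (fun y => g (Fin.cons c y)) := by
  rw [prodExpect, ← (Fin.consEquiv fun _ => B).sum_comp, Fintype.sum_prod_type]
  refine sum_congr rfl fun c _ => ?_
  simp only [prodExpect, mul_sum, Fin.prod_univ_succ, Fin.consEquiv_apply, Fin.cons_zero,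
    Fin.cons_succ, mul_assoc]
  rfl

def sumMoment (Z : B → ℝ) (n t : ℕ) : ℝ := prodExpect ν t (fun y => (∑ j, Z (y j)) ^ n)

theorem sumMoment_succ (Z : B → ℝ) (n t : ℕ) :
    sumMoment ν Z n (t + 1) =
      ∑ i ∈ range (n + 1), n.choose i * (∑ c, ν c * Z c ^ i) * sumMoment ν Z (n - i) t := by
  simp only [sumMoment, prodExpect_succ, Fin.sum_univ_succ, Fin.cons_zero, Fin.cons_succ, add_pow]
  simp only [prodExpect, mul_sum, sum_mul]
  conv_lhs => enter [2, c]; rw [sum_comm]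
  rw [sum_comm]
  refine sum_congr rfl fun i _ => ?_
  rw [sum_comm]
  exact sum_congr rfl fun y _ => sum_congr rfl fun c _ => by ring

end ProdExpect

section Moments

variable {B : Type*} [Fintype B] {ν : B → ℝ} (hν0 : ∀ c, 0 ≤ ν c) (hν1 : ∑ c, ν c = 1)
  {Z : B → ℝ}

include hν0 in
theorem prodExpect_nonneg {t : ℕ} {g : (Fin t → B) → ℝ} (hg : ∀ y, 0 ≤ g y) :
    0 ≤ prodExpect ν t g :=
  sum_nonneg fun y _ => mul_nonneg (prod_nonneg fun _ _ => hν0 _) (hg y)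

include hν0 hν1 in
theorem sum_mul_pow_le_one (hZ1 : ∀ c, |Z c| ≤ 1) (i : ℕ) : ∑ c, ν c * Z c ^ i ≤ 1 :=
  calc ∑ c, ν c * Z c ^ i ≤ ∑ c, ν c := sum_le_sum fun c _ =>
        mul_le_of_le_one_right (hν0 c) ((le_abs_self _).trans
          (by simpa [abs_pow] using pow_le_one₀ (abs_nonneg _) (hZ1 c)))
    _ = 1 := hν1

include hν1

theorem sumMoment_zero (t : ℕ) : sumMoment ν Z 0 t = 1 := by
  simp only [sumMoment, prodExpect, pow_zero, mul_one, sum_prod_eq_one ν hν1]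

variable (hZ : ∑ c, ν c * Z c = 0) (hZ1 : ∀ c, |Z c| ≤ 1)
include hZ

theorem sumMoment_one (t : ℕ) : sumMoment ν Z 1 t = 0 := by
  induction t with
  | zero => simp [sumMoment, prodExpect]
  | succ t ih => simp [sumMoment_succ, sum_range_succ, ih, hZ, sumMoment_zero hν1]

include hν0 hZ1

theorem sumMoment_two_le (t : ℕ) : sumMoment ν Z 2 t ≤ t := by
  induction t with
  | zero => simp [sumMoment, prodExpect]
  | succ t ih =>
    have hrec : sumMoment ν Z 2 (t + 1) = sumMoment ν Z 2 t + ∑ c, ν c * Z c ^ 2 := by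
      simp [sumMoment_succ, sum_range_succ, hZ, hν1, sumMoment_zero hν1, sumMoment_one hν1 hZ]
    have := sum_mul_pow_le_one hν0 hν1 hZ1 2
    push_cast
    linarith

theorem sumMoment_four_le (t : ℕ) : sumMoment ν Z 4 t ≤ 3 * t ^ 2 := by
  induction t with
  | zero => simp [sumMoment, prodExpect]
  | succ t ih =>
    have hrec : sumMoment ν Z 4 (t + 1) =
        sumMoment ν Z 4 t + 6 * (∑ c, ν c * Z c ^ 2) * sumMoment ν Z 2 t + ∑ c, ν c * Z c ^ 4 := by
      simp [sumMoment_succ, sum_range_succ, hZ, hν1, sumMoment_zero hν1, sumMoment_one hν1 hZ,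
        Nat.choose]
    have h2 := sum_mul_pow_le_one hν0 hν1 hZ1 2
    have h4 := sum_mul_pow_le_one hν0 hν1 hZ1 4
    have hM2 := sumMoment_two_le hν0 hν1 hZ hZ1 t
    have hM2' : 0 ≤ sumMoment ν Z 2 t := prodExpect_nonneg hν0 fun y => by positivity
    push_cast
    nlinarith

theorem sum_prod_filter_lt_abs_le {t : ℕ} (ht : 0 < t) {δ : ℝ} (hδ : 0 < δ) :
    ∑ y : Fin t → B with δ * t < |∑ j, Z (y j)|, ∏ j, ν (y j) ≤ 3 / (δ ^ 4 * t ^ 2) := by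
  have hweight : ∀ y : Fin t → B, 0 ≤ ∏ j, ν (y j) := fun y => prod_nonneg fun _ _ => hν0 _
  have hmarkov : (δ * t) ^ 4 * ∑ y : Fin t → B with δ * t < |∑ j, Z (y j)|, ∏ j, ν (y j) ≤
      sumMoment ν Z 4 t := by
    rw [mul_sum]
    refine (sum_le_sum fun y hy => ?_).trans
      (sum_le_sum_of_subset_of_nonneg (filter_subset _ _) fun y _ _ => ?_)
    · have hlt := (mem_filter.1 hy).2
      rw [mul_comm]
      gcongr
      · exact hweight y
      calc (δ * t) ^ 4 ≤ |∑ j, Z (y j)| ^ 4 := by gcongr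
        _ = (∑ j, Z (y j)) ^ 4 := by rw [pow_abs, abs_of_nonneg (by positivity)]
    · exact mul_nonneg (hweight y) (by positivity)
  have ht' : (0 : ℝ) < t := by exact_mod_cast ht
  rw [le_div_iff₀ (by positivity)]
  refine le_of_mul_le_mul_right ?_ (pow_pos ht' 2)
  calc _ = (δ * t) ^ 4 * ∑ y : Fin t → B with δ * t < |∑ j, Z (y j)|, ∏ j, ν (y j) := by ring
    _ ≤ sumMoment ν Z 4 t := hmarkov
    _ ≤ 3 * t ^ 2 := sumMoment_four_le hν0 hν1 hZ hZ1 t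

end Moments

section Counting

theorem sum_range_mul_eq_sum_sum {M : Type*} [AddCommMonoid M] (f : ℕ → M) (t J : ℕ) :
    ∑ i ∈ range (t * J), f i = ∑ j ∈ range J, ∑ s ∈ range t, f (t * j + s) := by
  induction J with
  | zero => simp
  | succ J ih => rw [mul_add_one, sum_range_add, ih, sum_range_succ]

theorem abs_sum_range_le_sum_abs_blocks {f : ℕ → ℝ} (hf : ∀ i, |f i| ≤ 1) {t : ℕ} (ht : 0 < t)
    (m : ℕ) : |∑ i ∈ range m, f i| ≤ ∑ j ∈ range (m / t), |∑ s ∈ range t, f (t * j + s)| + t := by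
  have htail : |∑ s ∈ range (m % t), f (t * (m / t) + s)| ≤ t :=
    calc _ ≤ ∑ s ∈ range (m % t), |f (t * (m / t) + s)| := abs_sum_le_sum_abs _ _
      _ ≤ ∑ s ∈ range (m % t), (1 : ℝ) := sum_le_sum fun s _ => hf _
      _ ≤ t := by simpa using (Nat.mod_lt m ht).le
  conv_lhs => rw [← Nat.div_add_mod m t, sum_range_add, sum_range_mul_eq_sum_sum]
  exact (abs_add_le _ _).trans (add_le_add ((abs_sum_le_sum_abs _ _)) htail)

theorem sum_le_card_mul_add_mul_card_filter {ι : Type*} (s : Finset ι) {g : ι → ℝ} {a c : ℝ}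
    (ha : 0 ≤ a) (hg : ∀ i ∈ s, g i ≤ c) [DecidablePred fun i => a < g i] :
    ∑ i ∈ s, g i ≤ #s * a + c * #{i ∈ s | a < g i} := by
  rw [natCast_card_filter, mul_sum, ← nsmul_eq_mul, ← sum_const, ← sum_add_distrib]
  refine sum_le_sum fun i hi => ?_
  split_ifs with h
  · linarith [hg i hi]
  · simpa using not_lt.1 h

variable {A : Type*} [DecidableEq A]

theorem card_superblock_mem_le_sum_nbocc (X : ℕ → A) {k t : ℕ} (hkt : 0 < t * k) {J n : ℕ}
    (hn : t * k * J ≤ n) (S : Finset (Fin t → Fin k → A)) :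
    #{j ∈ range J | superblock X k t j ∈ S} ≤
      ∑ y ∈ S, nbocc (List.ofFn (flattenBlocks y)) X n := by
  rw [card_eq_sum_card_fiberwise (s := {j ∈ range J | superblock X k t j ∈ S}) (t := S)
    fun j hj => (mem_filter.1 hj).2]
  refine sum_le_sum fun y _ => ?_
  rw [nbocc_ofFn]
  refine card_le_card_of_injOn (t * k * ·) (fun j hj => ?_)
    (fun _ _ _ _ h => Nat.eq_of_mul_eq_mul_left hkt h)
  simp only [coe_filter, mem_filter, mem_range, Set.mem_ofPred_eq] at hj ⊢
  obtain ⟨⟨hjJ, -⟩, rfl⟩ := hj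
  have : t * k * (j + 1) ≤ t * k * J := Nat.mul_le_mul_left _ hjJ
  refine ⟨by rw [mul_add_one] at this; omega, (flattenBlocks_superblock X k t j).symm⟩

end Counting

section BlockCount

variable {A : Type*} [Fintype A] [DecidableEq A]

noncomputable def atypical {B : Type*} [Fintype B] [DecidableEq B] (b : B) (p δ : ℝ) (t : ℕ) :
    Finset (Fin t → B) :=
  {y | δ * t < |∑ j, ((if y j = b then 1 else 0) - p)|}

theorem mem_atypical {B : Type*} [Fintype B] [DecidableEq B] {b : B} {p δ : ℝ} {t : ℕ}
    {y : Fin t → B} : y ∈ atypical b p δ t ↔ δ * t < |∑ j, ((if y j = b then 1 else 0) - p)| := by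
  simp [atypical]

theorem abs_ite_sub_le_one (P : Prop) [Decidable P] {p : ℝ} (hp0 : 0 ≤ p) (hp1 : p ≤ 1) :
    |(if P then 1 else 0) - p| ≤ 1 := by
  split_ifs <;> rw [abs_le] <;> constructor <;> linarith

theorem abs_nboccBlock_sub_le (X : ℕ → A) {k t : ℕ} (hk : 0 < k) (ht : 0 < t) (b : Fin k → A)
    {p δ : ℝ} (hp0 : 0 ≤ p) (hp1 : p ≤ 1) (hδ : 0 ≤ δ) (m : ℕ) :
    |(nboccBlock (List.ofFn b) X m : ℝ) - m * p| ≤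
      δ * m + t * ∑ y ∈ atypical b p δ t, (nbocc (List.ofFn (flattenBlocks y)) X (k * m) : ℝ)
        + t := by
  set Z : (Fin k → A) → ℝ := fun c => (if c = b then 1 else 0) - p
  set f : ℕ → ℝ := fun i => Z (window X (k * i) k)
  have hZ : ∀ c, |Z c| ≤ 1 := fun c => abs_ite_sub_le_one (c = b) hp0 hp1
  have hcount : (nboccBlock (List.ofFn b) X m : ℝ) - m * p = ∑ i ∈ range m, f i := by
    rw [nboccBlock_ofFn, natCast_card_filter]
    simp only [f, Z, sum_sub_distrib, sum_const, card_range, nsmul_eq_mul]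
  have hblock : ∀ j, ∑ s ∈ range t, f (t * j + s) = ∑ s, Z (superblock X k t j s) := fun j =>
    (Fin.sum_univ_eq_sum_range (fun s => f (t * j + s)) t).symm
  have hdev : ∀ y : Fin t → Fin k → A, |∑ s, Z (y s)| ≤ t := fun y =>
    calc _ ≤ ∑ s, |Z (y s)| := abs_sum_le_sum_abs _ _
      _ ≤ ∑ s : Fin t, (1 : ℝ) := sum_le_sum fun s _ => hZ _
      _ = t := by simp
  have hJ : ((m / t : ℕ) : ℝ) * t ≤ m := by exact_mod_cast Nat.div_mul_le_self m t
  have hbad := card_superblock_mem_le_sum_nbocc X (Nat.mul_pos ht hk)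
    (J := m / t) (n := k * m) (by nlinarith [Nat.div_mul_le_self m t]) (atypical b p δ t)
  calc _ = |∑ i ∈ range m, f i| := by rw [hcount]
    _ ≤ ∑ j ∈ range (m / t), |∑ s ∈ range t, f (t * j + s)| + t :=
      abs_sum_range_le_sum_abs_blocks (fun i => hZ _) ht m
    _ ≤ (m / t : ℕ) * (δ * t) + t * #{j ∈ range (m / t) | superblock X k t j ∈ atypical b p δ t}
        + t := by
      have := sum_le_card_mul_add_mul_card_filter (range (m / t)) (a := δ * t) (by positivity)
        fun j _ => hdev (superblock X k t j)
      rw [card_range] at this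
      simp only [hblock, mem_atypical]
      exact add_le_add_left this _
    _ ≤ δ * m + t * ∑ y ∈ atypical b p δ t, (nbocc (List.ofFn (flattenBlocks y)) X (k * m) : ℝ)
        + t := by
      have hbad' : (#{j ∈ range (m / t) | superblock X k t j ∈ atypical b p δ t} : ℝ) ≤
          ∑ y ∈ atypical b p δ t, (nbocc (List.ofFn (flattenBlocks y)) X (k * m) : ℝ) := by
        exact_mod_cast hbad
      have hδJ : ((m / t : ℕ) : ℝ) * (δ * t) ≤ δ * m := by
        rw [mul_left_comm]
        exact mul_le_mul_of_nonneg_left hJ hδ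
      linarith [mul_le_mul_of_nonneg_left hbad' (Nat.cast_nonneg t)]

end BlockCount

section Normality

variable {A : Type*} [DecidableEq A] {μ : A → ℝ} {X : ℕ → A}

theorem tendsto_nbocc_div (hX : BNormal μ X) {u : List A} (hu : u ≠ []) :
    Tendsto (fun n => (nbocc u X n : ℝ) / n) atTop (𝓝 (wmeas μ u)) := by
  have hratio : Tendsto (fun n : ℕ => 1 + (2 - u.length : ℝ) / n) atTop (𝓝 1) := by
    simpa using (tendsto_const_div_atTop_nhds_zero_nat (2 - u.length : ℝ)).const_add 1
  refine ((hX u hu).mul hratio).congr' ?_ |>.trans (by rw [mul_one])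
  filter_upwards [eventually_ge_atTop u.length, eventually_gt_atTop 0] with n hn hn0
  have hden : ((n + 2 - u.length : ℕ) : ℝ) = n + 2 - u.length := by
    rw [Nat.cast_sub (by omega)]; push_cast; ring
  have hn0' : (0 : ℝ) < n := by exact_mod_cast hn0
  have hden0 : (n : ℝ) + 2 - u.length ≠ 0 := by
    have : (u.length : ℝ) ≤ n := by exact_mod_cast hn
    linarith
  rw [freq, hden]
  field_simp
  ring

theorem tendsto_nbocc_mul_div (hX : BNormal μ X) {u : List A} (hu : u ≠ []) {k : ℕ}
    (hk : 0 < k) : Tendsto (fun m => (nbocc u X (k * m) : ℝ) / m) atTop (𝓝 (k * wmeas μ u)) := by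
  refine ((tendsto_nbocc_div hX hu).comp (tendsto_id.const_mul_atTop' hk)).const_mul (k : ℝ)
    |>.congr fun m => ?_
  have hk' : (k : ℝ) ≠ 0 := by exact_mod_cast hk.ne'
  simp only [Function.comp_apply, id, Nat.cast_mul]
  rcases eq_or_ne m 0 with rfl | hm
  · simp
  · field_simp

end Normality

section Bernoulli

variable {A : Type*} [Fintype A] {μ : A → ℝ}

theorem wmeas_ofFn_le_one (hμ0 : ∀ a, 0 ≤ μ a) (hμ1 : ∑ a, μ a = 1) {k : ℕ} (b : Fin k → A) :
    wmeas μ (List.ofFn b) ≤ 1 :=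
  wmeas_ofFn μ b ▸ prod_le_one (fun _ _ => hμ0 _)
    fun _ _ => hμ1 ▸ single_le_sum (fun a _ => hμ0 a) (mem_univ _)

theorem sum_wmeas_atypical_le [DecidableEq A] (hμ0 : ∀ a, 0 ≤ μ a) (hμ1 : ∑ a, μ a = 1)
    {k t : ℕ} (ht : 0 < t) (b : Fin k → A) {δ : ℝ} (hδ : 0 < δ) :
    ∑ y ∈ atypical b (wmeas μ (List.ofFn b)) δ t, wmeas μ (List.ofFn (flattenBlocks y)) ≤
      3 / (δ ^ 4 * t ^ 2) := by
  set ν : (Fin k → A) → ℝ := fun c => ∏ r, μ (c r)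
  have hν0 : ∀ c, 0 ≤ ν c := fun c => prod_nonneg fun _ _ => hμ0 _
  have hν1 : ∑ c, ν c = 1 := sum_prod_eq_one μ hμ1 k
  have hZ0 : ∑ c, ν c * ((if c = b then 1 else 0) - wmeas μ (List.ofFn b)) = 0 := by
    simp [mul_sub, sum_sub_distrib, ← sum_mul, hν1, wmeas_ofFn, ν]
  have hZ1 := fun c => abs_ite_sub_le_one (c = b) (wmeas_ofFn_nonneg hμ0 b)
    (wmeas_ofFn_le_one hμ0 hμ1 b)
  refine (sum_congr rfl fun y _ => ?_).trans_le
    (sum_prod_filter_lt_abs_le hν0 hν1 hZ0 hZ1 ht hδ)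
  rw [wmeas_ofFn, prod_flattenBlocks]

end Bernoulli

theorem eventually_abs_nboccBlock_div_sub_lt {A : Type*} [Fintype A] [DecidableEq A]
    {μ : A → ℝ} (hμ0 : ∀ a, 0 ≤ μ a) (hμ1 : ∑ a, μ a = 1) {X : ℕ → A} (hX : BNormal μ X)
    {k : ℕ} (hk : 0 < k) (b : Fin k → A) {ε : ℝ} (hε : 0 < ε) :
    ∀ᶠ m in atTop, |(nboccBlock (List.ofFn b) X m : ℝ) / m - wmeas μ (List.ofFn b)| < ε := by
  set p := wmeas μ (List.ofFn b)
  set δ := ε / 3 with hδε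
  have hδ : 0 < δ := by positivity
  obtain ⟨t, ht⟩ := exists_nat_gt (3 * k / δ ^ 5)
  have ht0 : (0 : ℝ) < t := (show (0 : ℝ) < 3 * k / δ ^ 5 by positivity).trans ht
  have htpos : 0 < t := Nat.cast_pos.1 ht0
  have hlim : Tendsto (fun m => t * ∑ y ∈ atypical b p δ t,
      (nbocc (List.ofFn (flattenBlocks y)) X (k * m) : ℝ) / m) atTop
      (𝓝 (t * (k * ∑ y ∈ atypical b p δ t, wmeas μ (List.ofFn (flattenBlocks y))))) := by
    rw [mul_sum]
    refine (tendsto_finsetSum _ fun y _ => tendsto_nbocc_mul_div hX ?_ hk).const_mul _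
    simpa [List.ofFn_eq_nil_iff] using (Nat.mul_pos htpos hk).ne'
  have hlimit_lt : t * (k * ∑ y ∈ atypical b p δ t, wmeas μ (List.ofFn (flattenBlocks y))) < δ :=
    calc _ ≤ t * (k * (3 / (δ ^ 4 * t ^ 2))) := by
          gcongr
          exact sum_wmeas_atypical_le hμ0 hμ1 htpos b hδ
      _ = 3 * k / δ ^ 5 / t * δ := by field_simp
      _ < δ := mul_lt_of_lt_one_left hδ ((div_lt_one ht0).2 ht)
  filter_upwards [hlim.eventually_lt_const hlimit_lt,
    (tendsto_const_div_atTop_nhds_zero_nat (t : ℝ)).eventually_lt_const hδ,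
    eventually_gt_atTop 0] with m h1 h2 hm
  have hm' : (0 : ℝ) < m := by exact_mod_cast hm
  rw [← sum_div, mul_div_assoc', div_lt_iff₀ hm'] at h1
  rw [div_lt_iff₀ hm'] at h2
  have hdet := abs_nboccBlock_sub_le X hk htpos b (wmeas_ofFn_nonneg hμ0 b)
    (wmeas_ofFn_le_one hμ0 hμ1 b) hδ.le m
  have hεm : ε * m = 3 * (δ * m) := by rw [hδε]; ring
  rw [show (nboccBlock (List.ofFn b) X m : ℝ) / m - p =
      ((nboccBlock (List.ofFn b) X m : ℝ) - m * p) / m by field_simp,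
    abs_div, abs_of_pos hm', div_lt_iff₀ hm']
  linarith

/-- `μ`-normality implies `μ`-block normality: every nonempty word `w`
occurs among aligned blocks of length `|w|` with asymptotic frequency `μ(w)`. -/
theorem normal_implies_block_normal
    {A : Type*} [Fintype A] [DecidableEq A]
    (μ : A → ℝ) (hμpos : ∀ a, 0 < μ a) (hμsum : ∑ a, μ a = 1)
    (X : ℕ → A) (hX : BNormal μ X) :
    ∀ w : List A, w ≠ [] →
      Tendsto (fun m => (nboccBlock w X m : ℝ) / m) atTop (𝓝 (wmeas μ w)) := by
  intro w hw
  obtain ⟨k, b, rfl⟩ : ∃ k, ∃ b : Fin k → A, w = List.ofFn b := ⟨_, w.get, (List.ofFn_get w).symm⟩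
  have hk : 0 < k := Nat.pos_of_ne_zero (by simpa [List.ofFn_eq_nil_iff] using hw)
  refine Metric.tendsto_nhds.2 fun ε hε => ?_
  simpa only [Real.dist_eq] using
    eventually_abs_nboccBlock_div_sub_lt (fun a => (hμpos a).le) hμsum hX hk b hε
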